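/- arXiv:1102.3733 — 4 statements merged into one kernel-verified Lean document; each statement's English description precedes it below -/
import Mathlib

section
/- If t is a head variable free applicative term and σ is a substitution, then (t↓_U)(σ↓_U) = (tσ)↓_U, where σ↓_U maps each variable x to σ(x)↓_U. -/
/-- First-order terms over a signature `F` with arity function `ar` and variables `V`. -/
inductive Term (F : Type) (ar : F → ℕ) (V : Type) : Type where
  | var : V → Term F ar V
  | app : (f : F) → (Fin (ar f) → Term F ar V) → Term F ar V

namespace Term

variable {F V : Type} {ar : F → ℕ}

/-- Application of a substitution. -/
def subst (σ : V → Term F ar V) : Term F ar V → Term F ar V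
  | .var x => σ x
  | .app f ts => .app f (fun i => (ts i).subst σ)

/-- Size of a term. -/
def size : Term F ar V → ℕ
  | .var _ => 1
  | .app _ ts => 1 + ∑ i, (ts i).size

end Term

section Rewriting

variable {F V : Type} {ar : F → ℕ}

/-- The (reflexive) subterm relation: `Subterm u t` means `u` occurs in `t`. -/
inductive Subterm : Term F ar V → Term F ar V → Prop where
  | refl (t) : Subterm t t
  | app (f) (ts : Fin (ar f) → Term F ar V) (i) (u) :
      Subterm u (ts i) → Subterm u (.app f ts)

/-- Proper subterm: `PSub u t` means `u` is a proper subterm of `t`. -/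
def PSub (u t : Term F ar V) : Prop :=
  ∃ (f : F) (ts : Fin (ar f) → Term F ar V) (i : Fin (ar f)),
    t = Term.app f ts ∧ Subterm u (ts i)

/-- One-step rewrite relation of a TRS `R`: closure of the rules under
contexts and substitutions. -/
inductive Rew (R : Set (Term F ar V × Term F ar V)) : Term F ar V → Term F ar V → Prop where
  | rule (l r : Term F ar V) (σ : V → Term F ar V) :
      (l, r) ∈ R → Rew R (l.subst σ) (r.subst σ)
  | congr (f : F) (ts : Fin (ar f) → Term F ar V) (i : Fin (ar f)) (u : Term F ar V) :
      Rew R (ts i) u → Rew R (.app f ts) (.app f (Function.update ts i u))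

/-- Many-step rewriting. -/
def RStar (R : Set (Term F ar V × Term F ar V)) : Term F ar V → Term F ar V → Prop :=
  Relation.ReflTransGen (Rew R)

/-- Normal forms. -/
def NF (R : Set (Term F ar V × Term F ar V)) (t : Term F ar V) : Prop := ∀ u, ¬ Rew R t u

/-- `t` rewrites to the normal form `u` (w.r.t. `R`). -/
def NormTo (R : Set (Term F ar V × Term F ar V)) (t u : Term F ar V) : Prop :=
  RStar R t u ∧ NF R u

/-- Termination: the rewrite relation is well-founded. -/
def Terminating (R : Set (Term F ar V × Term F ar V)) : Prop :=
  WellFounded (fun t s => Rew R s t)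

/-- Confluence. -/
def Confluent (R : Set (Term F ar V × Term F ar V)) : Prop :=
  ∀ s t u, RStar R s t → RStar R s u → ∃ v, RStar R t v ∧ RStar R u v

/-- Innermost one-step rewriting: the contracted redex has only normal
proper subterms. -/
inductive IRew (R : Set (Term F ar V × Term F ar V)) : Term F ar V → Term F ar V → Prop where
  | rule (l r : Term F ar V) (σ : V → Term F ar V) :
      (l, r) ∈ R → (∀ u, PSub u (l.subst σ) → NF R u) →
      IRew R (l.subst σ) (r.subst σ)
  | congr (f : F) (ts : Fin (ar f) → Term F ar V) (i : Fin (ar f)) (u : Term F ar V) :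
      IRew R (ts i) u → IRew R (.app f ts) (.app f (Function.update ts i u))

/-- Innermost termination. -/
def ITerminating (R : Set (Term F ar V × Term F ar V)) : Prop :=
  WellFounded (fun t s => IRew R s t)

/-- `m`-fold composition of a relation. -/
def RelPow (r : α → α → Prop) : ℕ → α → α → Prop
  | 0 => Eq
  | n + 1 => fun a c => ∃ b, r a b ∧ RelPow r n b c

/-- Derivation height of `t` w.r.t. a relation. -/
noncomputable def dh (r : α → α → Prop) (t : α) : ℕ :=
  sSup { m | ∃ u, RelPow r m t u }

/-- Derivational complexity w.r.t. a relation, restricted to starting terms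
satisfying `P`. -/
noncomputable def dcOn {F V : Type} {ar : F → ℕ}
    (r : Term F ar V → Term F ar V → Prop) (P : Term F ar V → Prop) (n : ℕ) : ℕ :=
  sSup { m | ∃ t, P t ∧ t.size ≤ n ∧ m = dh r t }

/-- `f ∈ O(g)`. -/
def BigO (f g : ℕ → ℕ) : Prop := ∃ M N : ℕ, ∀ n, f n ≤ M * g n + N

end Rewriting
section ATRS

/-- Signature for (un)curried applicative systems: `none` is the binary
application symbol `∘`, and `some (c, i)` is the symbol `c_i` of arity `i`
(with `c_0 = c` an applicative constant). -/
abbrev USig (C : Type) := Option (C × ℕ)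

/-- Arity function for `USig`. -/
def uar {C : Type} : USig C → ℕ
  | none => 2
  | some (_, i) => i

/-- Terms over the signature `USig C` (variables are natural numbers). -/
abbrev ATerm (C : Type) := Term (USig C) uar ℕ

variable {C : Type}

/-- Binary application `s ∘ t`. -/
def appT (s t : ATerm C) : ATerm C :=
  .app none (fun i => if i.1 = 0 then s else t)

/-- The applicative constant `c` (i.e. `c_0`). -/
def constT (c : C) : ATerm C :=
  .app (some (c, 0)) (fun i => (Nat.not_lt_zero _ i.isLt).elim)

/-- Symbols of a purely applicative term: only `∘` and constants `c_0`. -/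
def ApplicativeSym : USig C → Prop
  | none => True
  | some (_, i) => i = 0

/-- A term over the applicative signature (constants plus `∘`). -/
def ApplicativeT (t : ATerm C) : Prop :=
  ∀ (u : ATerm C) (f : USig C) (ts : Fin (uar f) → ATerm C),
    Subterm u t → u = Term.app f ts → ApplicativeSym f

/-- `headCount t = some (c, n)` iff `t = c ∘ t₁ ∘ ⋯ ∘ tₙ` for some terms `tᵢ`. -/
def headCount : ATerm C → Option (C × ℕ)
  | .var _ => none
  | .app none ts => (headCount (ts ⟨0, by simp [uar]⟩)).map (fun p => (p.1, p.2 + 1))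
  | .app (some (_, _ + 1)) _ => none
  | .app (some (c, 0)) _ => some (c, 0)

/-- The spine `c ∘ t₁ ∘ ⋯ ∘ tₙ` occurs as a subterm of a left- or
right-hand side of `R`. -/
def SpineIn (R : Set (ATerm C × ATerm C)) (c : C) (n : ℕ) : Prop :=
  ∃ p ∈ R, ∃ t : ATerm C, (Subterm t p.1 ∨ Subterm t p.2) ∧ headCount t = some (c, n)

/-- `aa` is the applicative-arity function of `R`: `aa c` is the maximal `n`
such that `c ∘ t₁ ∘ ⋯ ∘ tₙ` occurs in a rule of `R` (and `0` if `c` does not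
occur applied). -/
def AASpec (R : Set (ATerm C × ATerm C)) (aa : C → ℕ) : Prop :=
  ∀ c : C, (∀ n, SpineIn R c n → n ≤ aa c) ∧ (aa c = 0 ∨ SpineIn R c (aa c))

/-- A term is head variable free if no subterm is of the form `x ∘ v` with
`x` a variable. -/
def HeadVarFree (t : ATerm C) : Prop :=
  ∀ u : ATerm C, Subterm u t → ∀ (x : ℕ) (v : ATerm C), u ≠ appT (.var x) v

/-- Basic well-formedness of an applicative TRS: left-hand sides are not
variables, right-hand side variables occur on the left, and both sides are
applicative terms. -/
def IsATRS (R : Set (ATerm C × ATerm C)) : Prop :=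
  ∀ p ∈ R, (∀ x : ℕ, p.1 ≠ Term.var x) ∧
    (∀ x : ℕ, Subterm (.var x) p.2 → Subterm (.var x) p.1) ∧
    ApplicativeT p.1 ∧ ApplicativeT p.2

/-- `R` is left head variable free. -/
def LHVF (R : Set (ATerm C × ATerm C)) : Prop := ∀ p ∈ R, HeadVarFree p.1

/-- The variables `x_0, …, x_{i-1}`. -/
def uvars (i : ℕ) : Fin i → ATerm C := fun j => .var j.1

/-- The term `f_i(x_0,…,x_{i-1})`. -/
def fiT (c : C) (i : ℕ) : ATerm C := .app (some (c, i)) (fun j => .var j.1)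

/-- The uncurrying system `U`, with rules
`c_i(x_1,…,x_i) ∘ y → c_{i+1}(x_1,…,x_i,y)` for all `0 ≤ i < aa c`. -/
def USys (aa : C → ℕ) : Set (ATerm C × ATerm C) :=
  { p | ∃ (c : C) (i : ℕ), i < aa c ∧
      p = (appT (fiT c i) (.var i), fiT c (i + 1)) }

/-- The currying system `C(F)` (for a signature with arities `arF`), with
rules `f_{i+1}(x_1,…,x_i,y) → f_i(x_1,…,x_i) ∘ y` for all `0 ≤ i < arF f`
(where `f_{arF f}` plays the role of `f`). -/
def CurrySys {F : Type} (arF : F → ℕ) : Set (ATerm F × ATerm F) :=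
  { p | ∃ (f : F) (i : ℕ), i < arF f ∧
      p = (fiT f (i + 1), appT (fiT f i) (.var i)) }

/-- The η-saturation `R_η` of `R` (w.r.t. applicative arities `aa`). -/
inductive Eta (aa : C → ℕ) (R : Set (ATerm C × ATerm C)) : ATerm C × ATerm C → Prop where
  | base (p) : p ∈ R → Eta aa R p
  | eta (l r : ATerm C) (c : C) (n x : ℕ) :
      Eta aa R (l, r) → headCount l = some (c, n) → n < aa c →
      ¬ Subterm (.var x) l → ¬ Subterm (.var x) r →
      Eta aa R (appT l (.var x), appT r (.var x))

/-- The uncurried system `R_η↓`: the rules of `R_η` with both sides in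
`U`-normal form. -/
def EtaDown (aa : C → ℕ) (R : Set (ATerm C × ATerm C)) : Set (ATerm C × ATerm C) :=
  { p | ∃ l r : ATerm C, Eta aa R (l, r) ∧
      NormTo (USys aa) l p.1 ∧ NormTo (USys aa) r p.2 }

/-- The transformed system `U↓(R) = R_η↓ ∪ U(R)`. -/
def UD (aa : C → ℕ) (R : Set (ATerm C × ATerm C)) : Set (ATerm C × ATerm C) :=
  EtaDown aa R ∪ USys aa

/-- Symbols of the signature of `U↓(R)`: `∘` and `c_i` with `i ≤ aa c`. -/
def GoodSym (aa : C → ℕ) : USig C → Prop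
  | none => True
  | some (c, i) => i ≤ aa c

/-- A term over the signature of `U↓(R)`. -/
def GoodTerm (aa : C → ℕ) (t : ATerm C) : Prop :=
  ∀ (u : ATerm C) (f : USig C) (ts : Fin (uar f) → ATerm C),
    Subterm u t → u = Term.app f ts → GoodSym aa f

/-- `C'`: curry a term over the signature of `U↓(R)` and identify all
symbols `c_i` originating from the same constant `c`. -/
def curryId : ATerm C → ATerm C
  | .var x => .var x
  | .app none ts => appT (curryId (ts ⟨0, by simp [uar]⟩)) (curryId (ts ⟨1, by simp [uar]⟩))
  | .app (some (c, i)) ts =>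
      (List.ofFn (fun j : Fin (uar (some (c, i))) => curryId (ts j))).foldl appT (constT c)

end ATRS

/-!
Rewriting `tσ` inside `t` and then inside the range of `σ` reaches `t↓(σ↓)`, so it remains to see
that this term is `U`-normal. A `U`-redex is a term `c_i(…) ∘ s` with `i < aa c`. A redex in
`t↓(σ↓)` lies either inside some `σ(x)↓`, which is normal, or at a non-variable position of `t↓`.
In the latter case the head of the `∘` there is not a variable, since `U`-steps preserve head
variable freeness, so it is already a redex of `t↓`.
-/

section Rewriting

variable {F V : Type} {ar : F → ℕ} {R : Set (Term F ar V × Term F ar V)}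

theorem Term.subst_subst (t : Term F ar V) (τ σ : V → Term F ar V) :
    (t.subst τ).subst σ = t.subst (fun x => (τ x).subst σ) := by
  induction t with
  | var x => rfl
  | app f ts ih => exact congrArg (Term.app f) (funext ih)

theorem Subterm.trans {u v t : Term F ar V} (huv : Subterm u v) (hvt : Subterm v t) :
    Subterm u t := by
  induction hvt with
  | refl => exact huv
  | app f ts i v _ ih => exact .app f ts i u (ih huv)

theorem Subterm.exists_of_subst {u t : Term F ar V} {σ : V → Term F ar V}
    (h : Subterm u (t.subst σ)) :
    (∃ (f : F) (ts : Fin (ar f) → Term F ar V),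
        Subterm (.app f ts) t ∧ u = (Term.app f ts).subst σ) ∨
      ∃ x, Subterm (.var x) t ∧ Subterm u (σ x) := by
  induction t with
  | var x => exact .inr ⟨x, .refl _, h⟩
  | app f ts ih =>
    cases h with
    | refl => exact .inl ⟨f, ts, .refl _, rfl⟩
    | app _ _ i _ h =>
      rcases ih i h with ⟨g, us, hsub, rfl⟩ | ⟨x, hsub, hu⟩
      · exact .inl ⟨g, us, .app f ts i _ hsub, rfl⟩
      · exact .inr ⟨x, .app f ts i _ hsub, hu⟩

theorem NF.subterm {u t : Term F ar V} (ht : NF R t) (hu : Subterm u t) : NF R u := by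
  induction hu with
  | refl => exact ht
  | app f ts i u _ ih => exact ih fun w hw => ht _ (.congr f ts i w hw)

theorem Rew.exists_subterm_eq_subst {t v : Term F ar V} (h : Rew R t v) :
    ∃ u, Subterm u t ∧ ∃ l r σ, (l, r) ∈ R ∧ u = l.subst σ := by
  induction h with
  | rule l r σ hlr => exact ⟨_, .refl _, l, r, σ, hlr, rfl⟩
  | congr f ts i _ _ ih =>
    obtain ⟨u, hu, hred⟩ := ih
    exact ⟨u, .app f ts i u hu, hred⟩

theorem Rew.subst {s t : Term F ar V} (σ : V → Term F ar V) (h : Rew R s t) :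
    Rew R (s.subst σ) (t.subst σ) := by
  induction h with
  | rule l r τ hlr =>
    rw [Term.subst_subst, Term.subst_subst]
    exact .rule l r _ hlr
  | congr f ts i u _ ih =>
    have := Rew.congr f (Term.subst σ ∘ ts) i (u.subst σ) ih
    rwa [← Function.comp_update] at this

theorem RStar.subst {s t : Term F ar V} (σ : V → Term F ar V) (h : RStar R s t) :
    RStar R (s.subst σ) (t.subst σ) := by
  induction h with
  | refl => exact .refl
  | tail _ hstep ih => exact ih.tail (hstep.subst σ)

theorem RStar.congr (f : F) (ts : Fin (ar f) → Term F ar V) (i : Fin (ar f)) {u : Term F ar V}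
    (h : RStar R (ts i) u) : RStar R (.app f ts) (.app f (Function.update ts i u)) := by
  induction h with
  | refl => rw [Function.update_eq_self]; exact .refl
  | @tail v w _ hstep ih =>
    have := Rew.congr (R := R) f (Function.update ts i v) i w (by simpa using hstep)
    rw [Function.update_idem] at this
    exact ih.tail this

theorem RStar.app (f : F) {ts ts' : Fin (ar f) → Term F ar V}
    (h : ∀ i, RStar R (ts i) (ts' i)) : RStar R (.app f ts) (.app f ts') := by
  classical
  suffices ∀ s : Finset (Fin (ar f)), RStar R (.app f ts) (.app f (s.piecewise ts' ts)) by
    simpa using this Finset.univ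
  intro s
  induction s using Finset.induction_on with
  | empty => rw [Finset.piecewise_empty]; exact .refl
  | insert j s hj ih =>
    rw [Finset.piecewise_insert]
    refine ih.trans (RStar.congr f _ j ?_)
    rw [Finset.piecewise_eq_of_notMem _ _ _ hj]
    exact h j

theorem Term.rstar_subst_congr (t : Term F ar V) {σ σ' : V → Term F ar V}
    (h : ∀ x, RStar R (σ x) (σ' x)) : RStar R (t.subst σ) (t.subst σ') := by
  induction t with
  | var x => exact h x
  | app f ts ih => exact RStar.app f ih

end Rewriting

section Uncurrying

variable {C : Type} {aa : C → ℕ}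

theorem app_none_eq_appT (ts : Fin (uar (none : USig C)) → ATerm C) :
    Term.app none ts = appT (ts ⟨0, Nat.zero_lt_two⟩) (ts ⟨1, Nat.one_lt_two⟩) := by
  refine congrArg (Term.app none) (funext fun i => ?_)
  match i with
  | ⟨0, _⟩ => rfl
  | ⟨1, _⟩ => rfl

theorem appT_inj {a b a' b' : ATerm C} (h : appT a b = appT a' b') : a = a' ∧ b = b' :=
  ⟨by simpa using congrFun (Term.app.inj h).2.eq ⟨0, Nat.zero_lt_two⟩,
    by simpa using congrFun (Term.app.inj h).2.eq ⟨1, Nat.one_lt_two⟩⟩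

theorem appT_subst (s t : ATerm C) (σ : ℕ → ATerm C) :
    (appT s t).subst σ = appT (s.subst σ) (t.subst σ) := by
  simp only [appT, Term.subst]
  congr 1
  funext k
  split_ifs <;> rfl

theorem Subterm.appT_left {u s : ATerm C} (h : Subterm u s) (t : ATerm C) :
    Subterm u (appT s t) :=
  .app none _ ⟨0, Nat.zero_lt_two⟩ u h

theorem Subterm.appT_right {u t : ATerm C} (s : ATerm C) (h : Subterm u t) :
    Subterm u (appT s t) :=
  .app none _ ⟨1, Nat.one_lt_two⟩ u h

def IsURedex (aa : C → ℕ) (u : ATerm C) : Prop :=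
  ∃ (c : C) (i : ℕ) (us : Fin i → ATerm C) (s : ATerm C),
    i < aa c ∧ u = appT (.app (some (c, i)) us) s

theorem isURedex_subst_of_mem {l r : ATerm C} (h : (l, r) ∈ USys aa) (σ : ℕ → ATerm C) :
    IsURedex aa (l.subst σ) := by
  obtain ⟨c, i, hi, hlr⟩ := h
  cases hlr
  exact ⟨c, i, fun j => σ j, σ i, hi, appT_subst _ _ σ⟩

theorem IsURedex.exists_rew {u : ATerm C} (h : IsURedex aa u) : ∃ v, Rew (USys aa) u v := by
  obtain ⟨c, i, us, s, hi, rfl⟩ := h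
  let τ : ℕ → ATerm C := fun j => if hj : j < i then us ⟨j, hj⟩ else s
  have hu : appT (.app (some (c, i)) us) s = (appT (fiT c i) (.var i)).subst τ := by
    rw [appT_subst]
    congr 1
    · exact congrArg (Term.app _) (funext fun j => by simp [τ, Term.subst])
    · simp [τ, Term.subst]
  rw [hu]
  exact ⟨_, .rule _ _ τ ⟨c, i, hi, rfl⟩⟩

theorem nf_usys_iff {t : ATerm C} : NF (USys aa) t ↔ ∀ u, Subterm u t → ¬ IsURedex aa u := by
  refine ⟨fun ht u hu hred => ?_, fun h v hv => ?_⟩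
  · obtain ⟨v, hv⟩ := hred.exists_rew
    exact ht.subterm hu v hv
  · obtain ⟨u, hu, l, r, σ, hlr, rfl⟩ := hv.exists_subterm_eq_subst
    exact h _ hu (isURedex_subst_of_mem hlr σ)

theorem IsURedex.of_subst {f : USig C} {ts : Fin (uar f) → ATerm C} {σ : ℕ → ATerm C}
    (hroot : ∀ x v, Term.app f ts ≠ appT (.var x) v)
    (h : IsURedex aa ((Term.app f ts).subst σ)) : IsURedex aa (.app f ts) := by
  obtain ⟨c, i, us, s, hi, hred⟩ := h
  cases f with
  | some _ => cases hred
  | none =>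
    rw [app_none_eq_appT] at hred hroot ⊢
    rw [appT_subst] at hred
    have hhead := (appT_inj hred).1
    generalize ts ⟨0, Nat.zero_lt_two⟩ = head at hhead hroot
    cases head with
    | var x => exact (hroot x _ rfl).elim
    | app g ws =>
      cases (Term.app.inj hhead).1
      exact ⟨c, i, ws, _, hi, rfl⟩

theorem ne_var_of_rew_usys {u v : ATerm C} (h : Rew (USys aa) u v) (x : ℕ) : v ≠ .var x := by
  cases h with
  | rule l r τ hlr =>
    obtain ⟨c, n, -, hlr⟩ := hlr
    cases hlr
    nofun
  | congr => nofun

theorem HeadVarFree.subterm {u t : ATerm C} (ht : HeadVarFree t) (hu : Subterm u t) :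
    HeadVarFree u :=
  fun w hw => ht w (hw.trans hu)

theorem headVarFree_app {f : USig C} {ts : Fin (uar f) → ATerm C}
    (hts : ∀ i, HeadVarFree (ts i)) (hroot : ∀ x v, Term.app f ts ≠ appT (.var x) v) :
    HeadVarFree (.app f ts) := by
  intro u hu
  cases hu with
  | refl => exact hroot
  | app _ _ i _ hu => exact hts i u hu

theorem HeadVarFree.rew_usys {t v : ATerm C} (ht : HeadVarFree t) (h : Rew (USys aa) t v) :
    HeadVarFree v := by
  induction h with
  | rule l r τ hlr =>
    obtain ⟨c, n, -, hlr⟩ := hlr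
    cases hlr
    refine headVarFree_app (fun j => ht.subterm ?_) (fun _ _ => nofun)
    rw [appT_subst]
    obtain ⟨j, hj⟩ := j
    rcases Nat.lt_succ_iff_lt_or_eq.1 hj with hj | rfl
    · exact .appT_left (.app (some (c, n)) (fun k => τ k) ⟨j, hj⟩ _ (.refl _)) _
    · exact .appT_right _ (.refl _)
  | congr f ts i u hstep ih =>
    have hts : ∀ j, HeadVarFree (ts j) := fun j => ht.subterm (.app f ts j _ (.refl _))
    refine headVarFree_app (fun j => ?_) (fun x w hroot => ?_)
    · by_cases hj : j = i
      · subst hj; simpa using ih (hts j)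
      · simpa [hj] using hts j
    · cases f with
      | some _ => cases hroot
      | none =>
        rw [app_none_eq_appT] at hroot
        have hhead := (appT_inj hroot).1
        by_cases hi : i = ⟨0, Nat.zero_lt_two⟩
        · subst hi
          exact ne_var_of_rew_usys hstep x (by simpa using hhead)
        · rw [Function.update_of_ne (Ne.symm hi)] at hhead
          exact ht _ (.refl _) x _ (by rw [app_none_eq_appT, hhead])

theorem HeadVarFree.rstar_usys {t v : ATerm C} (ht : HeadVarFree t) (h : RStar (USys aa) t v) :
    HeadVarFree v := by
  induction h with
  | refl => exact ht
  | tail _ hstep ih => exact ih.rew_usys hstep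

end Uncurrying

theorem uncurry_subst_general {C : Type} (aa : C → ℕ)
    (t t' : ATerm C) (σ σ' : ℕ → ATerm C)
    (ht : HeadVarFree t)
    (htd : NormTo (USys aa) t t')
    (hσ : ∀ x, NormTo (USys aa) (σ x) (σ' x)) :
    NormTo (USys aa) (t.subst σ) (t'.subst σ') := by
  obtain ⟨hstar, hnf⟩ := htd
  have ht' : HeadVarFree t' := ht.rstar_usys hstar
  refine ⟨(hstar.subst σ).trans (t'.rstar_subst_congr fun x => (hσ x).1), ?_⟩
  rw [nf_usys_iff] at hnf ⊢
  intro u hu hred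
  rcases hu.exists_of_subst with ⟨f, ts, hsub, rfl⟩ | ⟨x, -, hu⟩
  · exact hnf _ hsub (hred.of_subst (ht' _ hsub))
  · exact nf_usys_iff.1 (hσ x).2 u hu hred

/-- for a head variable free term `t`,
`(t↓_U)(σ↓_U) = (tσ)↓_U`. -/
theorem uncurry_subst {C : Type} (R : Set (ATerm C × ATerm C)) (aa : C → ℕ)
    (hR : IsATRS R) (haa : AASpec R aa)
    (t t' : ATerm C) (σ σ' : ℕ → ATerm C)
    (ht : HeadVarFree t)
    (htd : NormTo (USys aa) t t')
    (hσ : ∀ x, NormTo (USys aa) (σ x) (σ' x)) :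
    NormTo (USys aa) (t.subst σ) (t'.subst σ') :=
  uncurry_subst_general aa t t' σ σ' ht htd hσ
end

section
/- Let R be a left head variable free ATRS and let s, t be terms over the signature of R_η↓ ∪ U(R). If s →_{U(R)} t then C'(s) = C'(t). -/
section Aux

variable {C : Type}

lemma curryId_app_none (ts : Fin (uar (none : USig C)) → ATerm C) :
    curryId (.app none ts) =
      appT (curryId (ts ⟨0, by simp [uar]⟩)) (curryId (ts ⟨1, by simp [uar]⟩)) := rfl

lemma curryId_app_some (c : C) (i : ℕ) (ts : Fin (uar (some (c, i))) → ATerm C) :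
    curryId (.app (some (c, i)) ts) =
      (List.ofFn (fun j => curryId (ts j))).foldl appT (constT c) := rfl

lemma curryId_ext (f : USig C) (ts ts' : Fin (uar f) → ATerm C)
    (h : ∀ j, curryId (ts j) = curryId (ts' j)) :
    curryId (.app f ts) = curryId (.app f ts') := by
  match f with
  | none => rw [curryId_app_none, curryId_app_none, h, h]
  | some (c, i) =>
      rw [curryId_app_some, curryId_app_some]
      exact congrArg _ (congrArg List.ofFn (funext h))

lemma subst_appT (σ : ℕ → ATerm C) (a b : ATerm C) :
    (appT a b).subst σ = appT (a.subst σ) (b.subst σ) := by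
  show Term.app none _ = Term.app none _
  congr 1
  funext j
  show Term.subst σ (if (j : ℕ) = 0 then a else b) = if (j : ℕ) = 0 then a.subst σ else b.subst σ
  split <;> rfl

lemma curryId_appT (a b : ATerm C) :
    curryId (appT a b) = appT (curryId a) (curryId b) := rfl

lemma curryId_rule (c : C) (i : ℕ) (σ : ℕ → ATerm C) :
    curryId ((appT (fiT c i) (.var i)).subst σ) = curryId ((fiT c (i + 1)).subst σ) := by
  rw [subst_appT]
  have hL : (fiT c i).subst σ = Term.app (some (c, i)) (fun j : Fin (uar (some (c, i))) => σ j.1) := rfl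
  have hR : (fiT c (i + 1)).subst σ =
      Term.app (some (c, i + 1)) (fun j : Fin (uar (some (c, i + 1))) => σ j.1) := rfl
  have hv : (Term.var i : ATerm C).subst σ = σ i := rfl
  rw [hL, hR, hv, curryId_appT, curryId_app_some, curryId_app_some]
  show appT ((List.ofFn fun j : Fin i => curryId (σ j.1)).foldl appT (constT c)) (curryId (σ i)) =
    (List.ofFn fun j : Fin (i + 1) => curryId (σ j.1)).foldl appT (constT c)
  rw [List.ofFn_succ' (fun j : Fin (i + 1) => curryId (σ j.1))]
  rw [List.concat_eq_append, List.foldl_append]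
  simp [Fin.last]

lemma curryId_rew {aa : C → ℕ} {s t : ATerm C} (hst : Rew (USys aa) s t) :
    curryId s = curryId t := by
  induction hst with
  | rule l r σ hmem =>
      obtain ⟨c, i, _, hp⟩ := hmem
      have h1 : l = appT (fiT c i) (.var i) := by
        have := congrArg Prod.fst hp; simpa using this
      have h2 : r = fiT c (i + 1) := by
        have := congrArg Prod.snd hp; simpa using this
      rw [h1, h2]; exact curryId_rule c i σ
  | congr f ts i u _ ih =>
      apply curryId_ext
      intro j
      by_cases hj : j = i
      · subst hj; simpa using ih
      · simp [Function.update_of_ne hj]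

end Aux

/-- for terms `s`, `t` over the signature of `U↓(R)`,
`s →_{U(R)} t` implies `C'(s) = C'(t)`. -/
theorem curried_step_eq {C : Type} (R : Set (ATerm C × ATerm C)) (aa : C → ℕ)
    (hR : IsATRS R) (hl : LHVF R) (haa : AASpec R aa)
    (s t : ATerm C) (hs : GoodTerm aa s) (ht : GoodTerm aa t)
    (hst : Rew (USys aa) s t) :
    curryId s = curryId t := curryId_rew hst
end

section
/- There exists an innermost terminating left head variable free ATRS R such that U↓(R) = R_η↓ ∪ U(R) is not innermost terminating. Concretely, R = {f ∘ x → f ∘ x, f → g} is innermost terminating, but U↓(R) = {f_1(x) → f_1(x), f → g, f_1(x) → g ∘ x, f ∘ x → f_1(x)} is not innermost terminating. -/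
/-- The constants of the concrete example. -/
inductive FG : Type where
  | f : FG
  | g : FG

/-- The constant `f`. -/
def fT : ATerm FG := constT FG.f
/-- The constant `g`. -/
def gT : ATerm FG := constT FG.g
/-- The term `f₁(t)`. -/
def f1T (t : ATerm FG) : ATerm FG := Term.app (some (FG.f, 1)) (fun _ => t)

/-- The ATRS `R = {f ∘ x → f ∘ x, f → g}`. -/
def Rfg : Set (ATerm FG × ATerm FG) :=
  {(appT fT (.var 0), appT fT (.var 0)), (fT, gT)}

/-- The TRS `U↓(R) = {f₁(x) → f₁(x), f → g, f₁(x) → g ∘ x, f ∘ x → f₁(x)}`. -/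
def UDfg : Set (ATerm FG × ATerm FG) :=
  {(f1T (.var 0), f1T (.var 0)), (fT, gT),
   (f1T (.var 0), appT gT (.var 0)), (appT fT (.var 0), f1T (.var 0))}

/-! In `R` the rule `f ∘ x → f ∘ x` never fires innermost, since its redex contains the redex `f`;
so innermost `R`-steps are `f → g`-steps, which decrease the number of occurrences of `f`.
In `U↓(R)` the redex `f₁(x)` has only the normal form `x` below its root, so the rule
`f₁(x) → f₁(x)` gives an innermost loop. -/

namespace Term

variable {F V : Type} {ar : F → ℕ}

theorem subst_var (t : Term F ar V) : t.subst .var = t := by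
  induction t with
  | var x => rfl
  | app f ts ih => simp only [subst, ih]

def weight (w : F → ℕ) : Term F ar V → ℕ
  | .var _ => 0
  | .app f ts => w f + ∑ i, (ts i).weight w

theorem weight_app_update_lt (w : F → ℕ) (f : F) (ts : Fin (ar f) → Term F ar V)
    (i : Fin (ar f)) {u : Term F ar V} (hu : u.weight w < (ts i).weight w) :
    (app f (Function.update ts i u)).weight w < (app f ts).weight w := by
  have hsum : ∑ j, (Function.update ts i u j).weight w < ∑ j, (ts j).weight w := by
    refine Finset.sum_lt_sum (fun j _ => ?_) ⟨i, Finset.mem_univ i, by simpa using hu⟩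
    rcases eq_or_ne j i with rfl | hj
    · simpa using hu.le
    · simp [hj]
  simpa only [weight] using Nat.add_lt_add_left hsum (w f)

end Term

section Rewriting

variable {F V : Type} {ar : F → ℕ} {R : Set (Term F ar V × Term F ar V)}

theorem Rew.of_mem {l r : Term F ar V} (h : (l, r) ∈ R) : Rew R l r := by
  simpa only [Term.subst_var] using Rew.rule l r .var h

theorem Rew.weight_lt (w : F → ℕ)
    (hR : ∀ p ∈ R, ∀ σ : V → Term F ar V, (p.2.subst σ).weight w < (p.1.subst σ).weight w)
    {s t : Term F ar V} (h : Rew R s t) : t.weight w < s.weight w := by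
  induction h with
  | rule l r σ hlr => exact hR (l, r) hlr σ
  | congr f ts i u _ ih => exact Term.weight_app_update_lt w f ts i ih

theorem terminating_of_weight_lt (w : F → ℕ)
    (hR : ∀ p ∈ R, ∀ σ : V → Term F ar V, (p.2.subst σ).weight w < (p.1.subst σ).weight w) :
    Terminating R :=
  Subrelation.wf (fun h => h.weight_lt w hR) (InvImage.wf (Term.weight w) wellFounded_lt)

theorem nf_var_of_forall_lhs_ne_var (hR : ∀ p ∈ R, ∀ x, p.1 ≠ .var x) (x : V) :
    NF R (.var x) := by
  intro u h
  generalize hx : Term.var x = t at h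
  cases h with
  | rule l r σ hlr =>
    cases l with
    | var y => exact hR _ hlr y rfl
    | app f ts => cases hx
  | congr => cases hx

theorem not_iTerminating_of_iRew_self {t : Term F ar V} (h : IRew R t t) :
    ¬ ITerminating R :=
  fun hwf => hwf.irrefl.irrefl t h

end Rewriting

theorem constT_subst {C : Type} (c : C) (σ : ℕ → ATerm C) : (constT c).subst σ = constT c := by
  simp only [constT, Term.subst]
  congr
  funext i
  exact absurd i.isLt (Nat.not_lt_zero _)

def fWeight : USig FG → ℕ
  | some (.f, 0) => 1
  | _ => 0

theorem terminating_fT_gT : Terminating ({(fT, gT)} : Set (ATerm FG × ATerm FG)) := by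
  refine terminating_of_weight_lt fWeight fun p hp σ => ?_
  obtain rfl := Set.mem_singleton_iff.mp hp
  simp only [fT, gT, constT_subst]
  decide

theorem psub_fT_appT_subst (σ : ℕ → ATerm FG) : PSub fT ((appT fT (.var 0)).subst σ) :=
  ⟨none, _, ⟨0, by decide⟩, rfl, by simpa [fT, constT_subst] using Subterm.refl fT⟩

theorem IRew.rew_fT_gT_of_Rfg {s t : ATerm FG} (h : IRew Rfg s t) : Rew {(fT, gT)} s t := by
  induction h with
  | rule l r σ hlr hnf =>
    rcases hlr with hlr | hlr
    · obtain ⟨rfl, -⟩ := Prod.mk.inj hlr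
      exact absurd (Rew.of_mem (by simp [Rfg])) (hnf fT (psub_fT_appT_subst σ) gT)
    · obtain ⟨rfl, rfl⟩ := Prod.mk.inj hlr
      exact Rew.rule _ _ σ rfl
  | congr f ts i u _ ih => exact Rew.congr f ts i u ih

theorem iTerminating_Rfg : ITerminating Rfg :=
  Subrelation.wf (fun h => h.rew_fT_gT_of_Rfg) terminating_fT_gT

theorem iRew_UDfg_f1T_self : IRew UDfg (f1T (.var 0)) (f1T (.var 0)) := by
  refine IRew.rule (f1T (.var 0)) (f1T (.var 0)) .var (by simp [UDfg]) ?_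
  rintro u ⟨f, ts, i, hts, hu⟩
  cases hts
  cases hu
  exact nf_var_of_forall_lhs_ne_var (by simp [UDfg, f1T, fT, gT, constT, appT]) 0

/-- `R = {f ∘ x → f ∘ x, f → g}` is innermost terminating, but
its uncurried system `U↓(R)` is not innermost terminating. -/
theorem uncurrying_does_not_preserve_innermost_termination :
    ITerminating Rfg ∧ ¬ ITerminating UDfg :=
  ⟨iTerminating_Rfg, not_iTerminating_of_iRew_self iRew_UDfg_f1T_self⟩
end

section
/- If s and t are terms with s →*_U t and u is a proper subterm of t, then there exists a proper subterm v of s with v →*_U u. That is, →*_U · ▷ ⊆ ▷ · →*_U. -/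
section Aux

variable {C : Type}

lemma subst_lhs (c : C) (i : ℕ) (σ : ℕ → ATerm C) :
    (appT (fiT c i) (.var i)).subst σ =
      Term.app none (fun k : Fin 2 =>
        if k.1 = 0 then Term.app (some (c, i)) (fun j : Fin i => σ j.1) else σ i) := by
  unfold appT fiT Term.subst
  congr 1
  funext k
  by_cases h : k.1 = 0 <;> simp [h, Term.subst] <;> rfl

lemma subst_rhs (c : C) (i : ℕ) (σ : ℕ → ATerm C) :
    (fiT c i).subst σ = Term.app (some (c, i)) (fun j : Fin i => σ j.1) := rfl

/-- Subterm version of the commutation for a single step. -/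
lemma rew_subterm_comm (aa : C → ℕ) :
    ∀ a b, Rew (USys aa) a b → ∀ u, Subterm u b →
    ∃ v, Subterm v a ∧ RStar (USys aa) v u := by
  intro a b h
  induction h with
  | rule l r σ hmem =>
      intro u hu
      obtain ⟨c, i, hi, hp⟩ := hmem
      rw [Prod.ext_iff] at hp
      obtain ⟨hl, hr⟩ := hp
      simp only at hl hr
      subst hl; subst hr
      rw [subst_rhs] at hu
      cases hu with
      | refl =>
          exact ⟨_, Subterm.refl _,
            Relation.ReflTransGen.single (Rew.rule (appT (fiT c i) (.var i)) (fiT c (i + 1)) σ ⟨c, i, hi, rfl⟩)⟩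
      | app f ts j u hsub =>
          refine ⟨u, ?_, Relation.ReflTransGen.refl⟩
          rw [subst_lhs]
          by_cases hj : (j : ℕ) < i
          · refine Subterm.app none _ ⟨0, by norm_num [uar]⟩ u ?_
            simp only
            exact Subterm.app (some (c, i)) _ ⟨j.1, hj⟩ u hsub
          · have hji : (j : ℕ) = i := Nat.le_antisymm (Nat.lt_succ_iff.mp j.isLt)
              (Nat.le_of_not_lt hj)
            refine Subterm.app none _ ⟨1, by norm_num [uar]⟩ u ?_
            simpa [hji] using hsub
  | congr f ts i w hrew ih =>
      intro u hu
      cases hu with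
      | refl =>
          exact ⟨_, Subterm.refl _,
            Relation.ReflTransGen.single (Rew.congr f ts i w hrew)⟩
      | app g tss j u hsub =>
          by_cases hj : j = i
          · subst hj
            rw [Function.update_self] at hsub
            obtain ⟨v, hv, hvu⟩ := ih u hsub
            exact ⟨v, Subterm.app f ts j v hv, hvu⟩
          · rw [Function.update_of_ne hj] at hsub
            exact ⟨u, Subterm.app f ts j u hsub, Relation.ReflTransGen.refl⟩

/-- Proper subterm version of the commutation for a single step. -/
lemma rew_psub_comm (aa : C → ℕ) (a b : ATerm C) (h : Rew (USys aa) a b)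
    (u : ATerm C) (hu : PSub u b) :
    ∃ v, PSub v a ∧ RStar (USys aa) v u := by
  cases h with
  | rule l r σ hmem =>
      obtain ⟨c, i, hi, hp⟩ := hmem
      rw [Prod.ext_iff] at hp
      obtain ⟨hl, hr⟩ := hp
      simp only at hl hr
      subst hl; subst hr
      obtain ⟨g, tss, j, hb, hsub⟩ := hu
      rw [subst_rhs] at hb
      injection hb with hg hts
      subst hg
      have hts' := eq_of_heq hts
      subst hts'
      refine ⟨u, ?_, Relation.ReflTransGen.refl⟩
      rw [subst_lhs]
      by_cases hj : (j : ℕ) < i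
      · exact ⟨none, _, ⟨0, by norm_num [uar]⟩, rfl, by
          exact Subterm.app (some (c, i)) _ ⟨j.1, hj⟩ u hsub⟩
      · have hji : (j : ℕ) = i := Nat.le_antisymm (Nat.lt_succ_iff.mp j.isLt)
          (Nat.le_of_not_lt hj)
        exact ⟨none, _, ⟨1, by norm_num [uar]⟩, rfl, by simpa [hji] using hsub⟩
  | congr f ts i w hrew =>
      obtain ⟨g, tss, j, hb, hsub⟩ := hu
      injection hb with hg hts
      subst hg
      have hts' := eq_of_heq hts
      subst hts'
      by_cases hj : j = i
      · subst hj
        rw [Function.update_self] at hsub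
        obtain ⟨v, hv, hvu⟩ := rew_subterm_comm aa _ _ hrew u hsub
        exact ⟨v, ⟨f, ts, j, rfl, hv⟩, hvu⟩
      · rw [Function.update_of_ne hj] at hsub
        exact ⟨u, ⟨f, ts, j, rfl, hsub⟩, Relation.ReflTransGen.refl⟩

end Aux

/-- `→*_U · ▷ ⊆ ▷ · →*_U`. -/
theorem star_psub_comm {C : Type} (R : Set (ATerm C × ATerm C)) (aa : C → ℕ)
    (hR : IsATRS R) (hl : LHVF R) (haa : AASpec R aa)
    (s t u : ATerm C) (hst : RStar (USys aa) s t) (hu : PSub u t) :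
    ∃ v, PSub v s ∧ RStar (USys aa) v u := by
  induction hst using Relation.ReflTransGen.head_induction_on with
  | refl => exact ⟨u, hu, Relation.ReflTransGen.refl⟩
  | head hstep _ ih =>
      obtain ⟨v, hv, hvu⟩ := ih
      obtain ⟨w, hw, hwv⟩ := rew_psub_comm aa _ _ hstep v hv
      exact ⟨w, hw, hwv.trans hvu⟩
end
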